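/- Let G be an infinite residually finite group with scale (Γ_n) and X = G_{(Γ_n)} the odometer. For each m, the set [[G]]_{m,R} of homeomorphisms of X which on each cylinder [a]_m (a ∈ G/Γ_m) act as right multiplication by some element of τ(G) has closure, in the topology of uniform convergence on Homeo(X), equal to the set [[X]]_{m,R} of homeomorphisms which on each cylinder [a]_m act as right multiplication by some element ξ_a ∈ X. -/

import Mathlib

/-!
If `g` is a right translation on `[a]_m` and agrees with `f` at level `N` everywhere, then
`x⁻¹ * f x` has the same level-`N` coordinate for all `x ∈ [a]_m`; letting `N → ∞`, the uniform
limit `f` is a right translation on `[a]_m`. Conversely, if `f x = x * ξ_a⁻¹` on `[a]_m`, choose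
`γ_a ∈ G` with `γ_a ≡ ξ_a` modulo `Γ_N`, `N ≥ m`. Precomposing `f` with
`x ↦ x * τ(γ_a)⁻¹ * ξ_a` on `[a]_m`, a homeomorphism preserving every `[a]_m`, gives a map acting
as right multiplication by `τ(γ_a)⁻¹` on `[a]_m` and agreeing with `f` up to level `N`.
-/

open scoped Pointwise

noncomputable section
namespace OdoPaper


variable {G : Type*} [Group G]

/-- Each finite quotient carries the discrete topology. -/
instance quotTop (Γ : Subgroup G) : TopologicalSpace (G ⧸ Γ) := ⊥
instance quotDisc (Γ : Subgroup G) : DiscreteTopology (G ⧸ Γ) := ⟨rfl⟩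

/-- The natural projection between coset spaces of nested subgroups. -/
def projOfLE {H K : Subgroup G} (h : H ≤ K) : G ⧸ H → G ⧸ K :=
  Quotient.map' id fun a b hab => by
    rw [QuotientGroup.leftRel_apply] at hab ⊢
    exact h hab

/-- The odometer space for a (not necessarily normal) decreasing sequence of subgroups. -/
abbrev OdoSp (Γ : ℕ → Subgroup G) (hdec : ∀ n, Γ (n + 1) ≤ Γ n) : Type _ :=
  {x : ∀ n, G ⧸ Γ n // ∀ n, projOfLE (hdec n) (x (n + 1)) = x n}

/-- The bonding homomorphisms for a decreasing sequence of normal subgroups. -/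
def odoMap (Γ : ℕ → Subgroup G) [∀ n, (Γ n).Normal] (hdec : ∀ n, Γ (n + 1) ≤ Γ n) (n : ℕ) :
    G ⧸ Γ (n + 1) →* G ⧸ Γ n :=
  QuotientGroup.map _ _ (MonoidHom.id G) (hdec n)

/-- The odometer associated to a decreasing sequence of normal subgroups, as a subgroup of
the product of the finite quotients. -/
def Odo (Γ : ℕ → Subgroup G) [∀ n, (Γ n).Normal] (hdec : ∀ n, Γ (n + 1) ≤ Γ n) :
    Subgroup (∀ n, G ⧸ Γ n) where
  carrier := {x | ∀ n, odoMap Γ hdec n (x (n + 1)) = x n}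
  one_mem' := fun n => map_one _
  mul_mem' := fun {a b} ha hb n => by
    simp only [Pi.mul_apply, map_mul, ha n, hb n]
  inv_mem' := fun {a} ha n => by
    simp only [Pi.inv_apply, map_inv, ha n]

/-- The canonical homomorphism from `G` to its odometer. -/
def tau (Γ : ℕ → Subgroup G) [∀ n, (Γ n).Normal] (hdec : ∀ n, Γ (n + 1) ≤ Γ n) :
    G →* Odo Γ hdec where
  toFun g := ⟨fun n => QuotientGroup.mk g, fun n => rfl⟩
  map_one' := rfl
  map_mul' g₁ g₂ := rfl

/-- Cylinder set of level `n` through the coset `a`. -/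
def cyl (Γ : ℕ → Subgroup G) [∀ n, (Γ n).Normal] (hdec : ∀ n, Γ (n + 1) ≤ Γ n) (n : ℕ)
    (a : G ⧸ Γ n) : Set (Odo Γ hdec) :=
  {x | (x : ∀ k, G ⧸ Γ k) n = a}

/-- The metric on the odometer: `d(x,y) = 2^{-min{n : xₙ ≠ yₙ}}`. -/
def odoDist {Γ : ℕ → Subgroup G} [∀ n, (Γ n).Normal] {hdec : ∀ n, Γ (n + 1) ≤ Γ n}
    (x y : Odo Γ hdec) : ℝ :=
  letI := Classical.dec (x = y)
  if x = y then 0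
  else (1 / 2 : ℝ) ^ sInf {n : ℕ | (x : ∀ k, G ⧸ Γ k) n ≠ (y : ∀ k, G ⧸ Γ k) n}



/-- The group of self-homeomorphisms of a space, with `(f * g) x = f (g x)`. -/
instance homeoGroup (X : Type*) [TopologicalSpace X] : Group (X ≃ₜ X) where
  mul f g := g.trans f
  one := Homeomorph.refl X
  inv := Homeomorph.symm
  mul_assoc _ _ _ := Homeomorph.ext fun _ => rfl
  one_mul _ := Homeomorph.ext fun _ => rfl
  mul_one _ := Homeomorph.ext fun _ => rfl
  inv_mul_cancel f := Homeomorph.ext fun x => f.symm_apply_apply x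

theorem homeo_mul_apply {X : Type*} [TopologicalSpace X] (f g : X ≃ₜ X) (x : X) :
    (f * g) x = f (g x) := rfl

theorem homeo_inv_apply {X : Type*} [TopologicalSpace X] (f : X ≃ₜ X) (x : X) :
    f⁻¹ x = f.symm x := rfl

section Full

variable (X : Type*) [Group X] [TopologicalSpace X]

/-- Membership in the topological full group of the right translation action of `X`
on itself: on each piece of a finite clopen partition, `f` is a right translation. -/
def InFullR (f : X ≃ₜ X) : Prop :=
  ∃ ξ : X → X, IsLocallyConstant ξ ∧ (Set.range ξ).Finite ∧ ∀ x, f x = x * (ξ x)⁻¹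

/-- Membership in the topological full group of the left translation action. -/
def InFullL (f : X ≃ₜ X) : Prop :=
  ∃ ξ : X → X, IsLocallyConstant ξ ∧ (Set.range ξ).Finite ∧ ∀ x, f x = ξ x * x

/-- The topological full group `[[X]]_R` of the right translation action. -/
def TFGR : Subgroup (X ≃ₜ X) where
  carrier := {f | InFullR X f}
  one_mem' := ⟨fun _ => 1, IsLocallyConstant.const 1,
    (Set.finite_singleton 1).subset (Set.range_subset_iff.2 fun _ => rfl),
    fun x => by simp [homeo_mul_apply] <;> rfl⟩
  mul_mem' := by
    rintro f g ⟨ξf, hf1, hf2, hf3⟩ ⟨ξg, hg1, hg2, hg3⟩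
    refine ⟨fun x => ξf (g x) * ξg x,
      (hf1.comp_continuous g.continuous).mul hg1,
      (hf2.mul hg2).subset ?_, fun x => ?_⟩
    · rintro y ⟨x, rfl⟩
      exact Set.mul_mem_mul ⟨g x, rfl⟩ ⟨x, rfl⟩
    · show f (g x) = x * (ξf (g x) * ξg x)⁻¹
      rw [mul_inv_rev, ← mul_assoc, ← hg3 x, ← hf3 (g x)]
  inv_mem' := by
    rintro f ⟨ξ, h1, h2, h3⟩
    refine ⟨fun x => (ξ (f.symm x))⁻¹,
      (h1.comp_continuous f.symm.continuous).inv, (h2.inv).subset ?_, fun x => ?_⟩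
    · rintro y ⟨x, rfl⟩
      exact Set.inv_mem_inv.2 ⟨f.symm x, rfl⟩
    · have h := h3 (f.symm x)
      rw [f.apply_symm_apply] at h
      show f.symm x = x * ((ξ (f.symm x))⁻¹)⁻¹
      rw [inv_inv]
      exact (eq_mul_inv_iff_mul_eq.mp h).symm

/-- The topological full group `[[X]]_L` of the left translation action. -/
def TFGL : Subgroup (X ≃ₜ X) where
  carrier := {f | InFullL X f}
  one_mem' := ⟨fun _ => 1, IsLocallyConstant.const 1,
    (Set.finite_singleton 1).subset (Set.range_subset_iff.2 fun _ => rfl),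
    fun x => by simp <;> rfl⟩
  mul_mem' := by
    rintro f g ⟨ξf, hf1, hf2, hf3⟩ ⟨ξg, hg1, hg2, hg3⟩
    refine ⟨fun x => ξf (g x) * ξg x,
      (hf1.comp_continuous g.continuous).mul hg1,
      (hf2.mul hg2).subset ?_, fun x => ?_⟩
    · rintro y ⟨x, rfl⟩
      exact Set.mul_mem_mul ⟨g x, rfl⟩ ⟨x, rfl⟩
    · show f (g x) = ξf (g x) * ξg x * x
      rw [mul_assoc, ← hg3 x, ← hf3 (g x)]
  inv_mem' := by
    rintro f ⟨ξ, h1, h2, h3⟩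
    refine ⟨fun x => (ξ (f.symm x))⁻¹,
      (h1.comp_continuous f.symm.continuous).inv, (h2.inv).subset ?_, fun x => ?_⟩
    · rintro y ⟨x, rfl⟩
      exact Set.inv_mem_inv.2 ⟨f.symm x, rfl⟩
    · have h := h3 (f.symm x)
      rw [f.apply_symm_apply] at h
      show f.symm x = (ξ (f.symm x))⁻¹ * x
      exact eq_inv_mul_iff_mul_eq.mpr h.symm

/-- `f` commutes with left translation by every element of `S`. -/
def IsAutLOn (S : Set X) (f : X ≃ₜ X) : Prop :=
  ∀ s ∈ S, ∀ x, f (s * x) = s * f x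

theorem IsAutLOn.one (S : Set X) : IsAutLOn X S 1 := fun _ _ _ => rfl

theorem IsAutLOn.mul {S T : Set X} {f g : X ≃ₜ X} (hf : IsAutLOn X S f)
    (hg : IsAutLOn X T g) : IsAutLOn X (S ∩ T) (f * g) := fun s hs x => by
  rw [homeo_mul_apply, hg s hs.2, hf s hs.1, homeo_mul_apply]

theorem IsAutLOn.inv {S : Set X} {f : X ≃ₜ X} (hf : IsAutLOn X S f) :
    IsAutLOn X S f⁻¹ := fun s hs x => by
  rw [homeo_inv_apply]
  have h := hf s hs (f.symm x)
  rw [f.apply_symm_apply] at h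
  rw [← h, f.symm_apply_apply]
  rfl

/-- The group of automorphisms of the left translation action of `S ⊆ X` on `X`. -/
def AutLgrp (S : Set X) : Subgroup (X ≃ₜ X) where
  carrier := {f | IsAutLOn X S f}
  one_mem' := IsAutLOn.one X S
  mul_mem' := fun {f g} hf hg => by
    have := IsAutLOn.mul X (S := S) (T := S) hf hg
    simpa using this
  inv_mem' := fun {f} hf => IsAutLOn.inv X hf

end Full



section Stab
variable (X : Type*) [Group X] [TopologicalSpace X]

/-- A (finitely additive) invariant mean: the classical definition of amenability for
(discrete) groups. -/
def IsAmenable (Γ : Type*) [Group Γ] : Prop :=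
  ∃ m : Set Γ → ℝ, (∀ A, 0 ≤ m A) ∧ m Set.univ = 1 ∧
    (∀ A B, Disjoint A B → m (A ∪ B) = m A + m B) ∧
    ∀ (g : Γ) (A), m ((g * ·) '' A) = m A

/-- `C` is a minimal component for the left translation action of the subset `T ⊆ X`. -/
def IsMinCompL (T : Set X) (C : Set X) : Prop :=
  C.Nonempty ∧ IsClosed C ∧ (∀ t ∈ T, ∀ x ∈ C, t * x ∈ C) ∧
    ∀ x ∈ C, C ⊆ closure ((· * x) '' T)

/-- The subgroup `[[X]]_{U,L}` of homeomorphisms acting as a left translation on each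
left coset of `U`. -/
def fullUL (U : Subgroup X) : Subgroup (X ≃ₜ X) where
  carrier := {f | ∀ a : X, ∃ ξ : X, ∀ x : X,
    (QuotientGroup.mk x : X ⧸ U) = QuotientGroup.mk a → f x = ξ * x}
  one_mem' := fun a => ⟨1, fun x _ => (one_mul x).symm⟩
  mul_mem' := by
    intro f g hf hg a
    obtain ⟨ξg, hξg⟩ := hg a
    obtain ⟨ξf, hξf⟩ := hf (ξg * a)
    refine ⟨ξf * ξg, fun x hx => ?_⟩
    have hx' : (QuotientGroup.mk (ξg * x) : X ⧸ U) = QuotientGroup.mk (ξg * a) := by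
      rw [QuotientGroup.eq] at hx ⊢
      simpa [mul_assoc] using hx
    show f (g x) = ξf * ξg * x
    rw [hξg x hx, hξf (ξg * x) hx', mul_assoc]
  inv_mem' := by
    intro f hf a
    obtain ⟨ξ, hξ⟩ := hf (f.symm a)
    refine ⟨ξ⁻¹, fun x hx => ?_⟩
    have ha : f (f.symm a) = ξ * f.symm a := hξ _ rfl
    rw [f.apply_symm_apply] at ha
    have hx' : (QuotientGroup.mk (ξ⁻¹ * x) : X ⧸ U) = QuotientGroup.mk (f.symm a) := by
      rw [QuotientGroup.eq] at hx ⊢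
      have : f.symm a = ξ⁻¹ * a := eq_inv_mul_iff_mul_eq.mpr ha.symm
      rw [this]
      simpa [mul_assoc] using hx
    have := hξ (ξ⁻¹ * x) hx'
    rw [mul_inv_cancel_left] at this
    show f.symm x = ξ⁻¹ * x
    conv_lhs => rw [← this]
    rw [f.symm_apply_apply]
end Stab

section Full0
variable (X : Type*) [Group X] [TopologicalSpace X]

/-- The subgroup `[[X]]⁰_{U,L}` of elements of the topological full group preserving each
left coset `aU` and acting on it by left multiplication by an element of `aUa⁻¹`. -/
def full0L (U : Subgroup X) : Subgroup (X ≃ₜ X) where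
  carrier := {f | ∀ a : X, ∃ u ∈ U, ∀ x : X,
    (QuotientGroup.mk x : X ⧸ U) = QuotientGroup.mk a → f x = a * u * a⁻¹ * x}
  one_mem' := fun a => ⟨1, U.one_mem, fun x _ => by
    show x = a * 1 * a⁻¹ * x
    simp⟩
  mul_mem' := by
    intro f g hf hg a
    obtain ⟨ug, hugU, hg'⟩ := hg a
    obtain ⟨uf, hufU, hf'⟩ := hf a
    refine ⟨uf * ug, U.mul_mem hufU hugU, fun x hx => ?_⟩
    have hgx : (QuotientGroup.mk (g x) : X ⧸ U) = QuotientGroup.mk a := by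
      rw [hg' x hx]
      rw [QuotientGroup.eq] at hx ⊢
      have h : (a * ug * a⁻¹ * x)⁻¹ * a = x⁻¹ * a * ug⁻¹ := by group
      rw [h]
      exact U.mul_mem hx (U.inv_mem hugU)
    show f (g x) = a * (uf * ug) * a⁻¹ * x
    rw [hf' (g x) hgx, hg' x hx]
    group
  inv_mem' := by
    intro f hf a
    obtain ⟨u, huU, hu⟩ := hf a
    refine ⟨u⁻¹, U.inv_mem huU, fun x hx => ?_⟩
    have hx' : (QuotientGroup.mk (a * u⁻¹ * a⁻¹ * x) : X ⧸ U) = QuotientGroup.mk a := by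
      rw [QuotientGroup.eq] at hx ⊢
      have h : (a * u⁻¹ * a⁻¹ * x)⁻¹ * a = x⁻¹ * a * u := by group
      rw [h]
      exact U.mul_mem hx huU
    have h2 := hu _ hx'
    have h3 : f (a * u⁻¹ * a⁻¹ * x) = x := by rw [h2]; group
    show f.symm x = a * u⁻¹ * a⁻¹ * x
    conv_lhs => rw [← h3]
    rw [f.symm_apply_apply]

end Full0

section StabAut
variable {G : Type*} [Group G]

/-- The stabilized automorphism group of the (left) odometer: homeomorphisms commuting
with the left translation action of some finite-index subgroup of `G`. -/
def stabAut (Γ : ℕ → Subgroup G) [∀ n, (Γ n).Normal] (hdec : ∀ n, Γ (n + 1) ≤ Γ n) :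
    Subgroup (↥(Odo Γ hdec) ≃ₜ ↥(Odo Γ hdec)) where
  carrier := {f | ∃ H : Subgroup G, H.FiniteIndex ∧
    IsAutLOn _ (tau Γ hdec '' (H : Set G)) f}
  one_mem' := ⟨⊤, inferInstance, IsAutLOn.one _ _⟩
  mul_mem' := by
    rintro f g ⟨H₁, h₁, hf⟩ ⟨H₂, h₂, hg⟩
    haveI := h₁; haveI := h₂
    refine ⟨H₁ ⊓ H₂, inferInstance, ?_⟩
    rintro s ⟨γ, hγ, rfl⟩ x
    have hγ' := Subgroup.mem_inf.mp hγ
    rw [homeo_mul_apply, hg _ ⟨γ, hγ'.2, rfl⟩, hf _ ⟨γ, hγ'.1, rfl⟩, homeo_mul_apply]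
  inv_mem' := by
    rintro f ⟨H, h, hf⟩
    exact ⟨H, h, IsAutLOn.inv _ hf⟩

/-- The clopen subgroup `[1]_n` of the odometer (kernel of the projection to level `n`). -/
def levelKer (Γ : ℕ → Subgroup G) [∀ n, (Γ n).Normal] (hdec : ∀ n, Γ (n + 1) ≤ Γ n)
    (n : ℕ) : Subgroup ↥(Odo Γ hdec) :=
  ((Pi.evalMonoidHom (fun k => G ⧸ Γ k) n).comp (Odo Γ hdec).subtype).ker

end StabAut

section Adic

/-- The subgroups `m^n ℤ` of `ℤ`, multiplicatively. -/
def zmSub (m : ℕ) (n : ℕ) : Subgroup (Multiplicative ℤ) :=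
  Subgroup.closure {Multiplicative.ofAdd ((m : ℤ) ^ n)}

theorem zmdec (m : ℕ) : ∀ n, zmSub m (n + 1) ≤ zmSub m n := fun n => by
  rw [zmSub, Subgroup.closure_le]
  intro y hy
  rw [Set.mem_singleton_iff] at hy
  subst hy
  rw [SetLike.mem_coe, zmSub, Subgroup.mem_closure_singleton]
  refine ⟨(m : ℤ), ?_⟩
  rw [← ofAdd_zsmul]
  congr 1
  rw [smul_eq_mul, pow_succ]
  ring

/-- The `m`-adic odometer group `ℤ_m`, the inverse limit of `ℤ/m^nℤ`. -/
def Zm (m : ℕ) : Subgroup (∀ n, Multiplicative ℤ ⧸ zmSub m n) := Odo (zmSub m) (zmdec m)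

/-- The scale of `ℤ²` generated by `(p^n, 0)` and `(0, q^n)`, multiplicatively. -/
def zsqSub (p q : ℕ) (n : ℕ) : Subgroup (Multiplicative (ℤ × ℤ)) :=
  Subgroup.closure {Multiplicative.ofAdd ((((p : ℤ) ^ n, 0) : ℤ × ℤ)),
    Multiplicative.ofAdd ((((0 : ℤ), (q : ℤ) ^ n) : ℤ × ℤ))}

theorem zsqdec (p q : ℕ) : ∀ n, zsqSub p q (n + 1) ≤ zsqSub p q n := fun n => by
  rw [zsqSub, Subgroup.closure_le]
  intro y hy
  rw [Set.mem_insert_iff, Set.mem_singleton_iff] at hy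
  rcases hy with rfl | rfl
  · rw [SetLike.mem_coe]
    have h : (Multiplicative.ofAdd ((((p : ℤ) ^ n, 0) : ℤ × ℤ))) ^ ((p : ℕ) : ℤ) =
        Multiplicative.ofAdd ((((p : ℤ) ^ (n + 1), 0) : ℤ × ℤ)) := by
      rw [← ofAdd_zsmul]
      congr 1
      rw [Prod.smul_mk, smul_eq_mul, smul_eq_mul, pow_succ]
      simp [Prod.ext_iff]; ring
    rw [← h]
    exact Subgroup.zpow_mem _ (Subgroup.subset_closure (by simp [zsqSub])) _
  · rw [SetLike.mem_coe]
    have h : (Multiplicative.ofAdd ((((0 : ℤ), (q : ℤ) ^ n) : ℤ × ℤ))) ^ ((q : ℕ) : ℤ) =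
        Multiplicative.ofAdd ((((0 : ℤ), (q : ℤ) ^ (n + 1)) : ℤ × ℤ)) := by
      rw [← ofAdd_zsmul]
      congr 1
      rw [Prod.smul_mk, smul_eq_mul, smul_eq_mul, pow_succ]
      simp [Prod.ext_iff]; ring
    rw [← h]
    exact Subgroup.zpow_mem _ (Subgroup.subset_closure (by simp [zsqSub])) _

end Adic

/-- `C` is a minimal component of the action of the subgroup `H ≤ G` on `X` via `ρ`. -/
def IsMinCompAct {G X : Type*} [Group G] [TopologicalSpace X] (ρ : G →* (X ≃ₜ X))
    (H : Subgroup G) (C : Set X) : Prop :=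
  C.Nonempty ∧ IsClosed C ∧ (∀ h ∈ H, ∀ x ∈ C, ρ h x ∈ C) ∧
    ∀ x ∈ C, C ⊆ closure {y | ∃ h ∈ H, y = ρ h x}

section FiberwiseMulRight

variable {X D : Type*} [Group X] [TopologicalSpace X] [IsTopologicalGroup X] [TopologicalSpace D]

def fiberwiseMulRight (π : X → D) (e : D → X) (hπ : Continuous π) (he : Continuous e)
    (hπe : ∀ x d, π (x * e d) = π x) : X ≃ₜ X where
  toFun x := x * e (π x)
  invFun x := x * (e (π x))⁻¹
  left_inv x := by simp only [hπe, mul_inv_cancel_right]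
  right_inv x := by
    have hx : π (x * (e (π x))⁻¹) = π x := by
      simpa only [inv_mul_cancel_right] using (hπe (x * (e (π x))⁻¹) (π x)).symm
    simp only [hx, inv_mul_cancel_right]
  continuous_toFun := continuous_id.mul (he.comp hπ)
  continuous_invFun := continuous_id.mul (he.comp hπ).inv

theorem fiberwiseMulRight_apply (π : X → D) (e : D → X) (hπ : Continuous π) (he : Continuous e)
    (hπe : ∀ x d, π (x * e d) = π x) (x : X) :
    fiberwiseMulRight π e hπ he hπe x = x * e (π x) := rfl

end FiberwiseMulRight

section Odometer

variable {G : Type*} [Group G]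

instance (H : Subgroup G) [H.Normal] : IsTopologicalGroup (G ⧸ H) where
  continuous_mul := continuous_of_discreteTopology
  continuous_inv := continuous_of_discreteTopology

variable {Γ : ℕ → Subgroup G} [∀ n, (Γ n).Normal] {hdec : ∀ n, Γ (n + 1) ≤ Γ n}

@[simp]
theorem Odo.mul_apply (x y : Odo Γ hdec) (n : ℕ) : (x * y).1 n = x.1 n * y.1 n := rfl

@[simp]
theorem Odo.inv_apply (x : Odo Γ hdec) (n : ℕ) : x⁻¹.1 n = (x.1 n)⁻¹ := rfl

theorem Odo.continuous_apply (n : ℕ) : Continuous fun x : Odo Γ hdec => x.1 n :=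
  (_root_.continuous_apply n).comp continuous_subtype_val

theorem Odo.exists_tau_apply_eq (x : Odo Γ hdec) (n : ℕ) : ∃ g : G, (tau Γ hdec g).1 n = x.1 n :=
  QuotientGroup.mk_surjective _

theorem Odo.apply_eq_of_le {x y : Odo Γ hdec} {k N : ℕ} (hkN : k ≤ N) (h : x.1 N = y.1 N) :
    x.1 k = y.1 k := by
  induction N, hkN using Nat.le_induction with
  | base => exact h
  | succ n _ ih => exact ih (by rw [← x.2 n, ← y.2 n, h])

theorem odoDist_le_iff {x y : Odo Γ hdec} {N : ℕ} :
    odoDist x y ≤ (1 / 2 : ℝ) ^ (N + 1) ↔ x.1 N = y.1 N := by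
  by_cases hxy : x = y
  · subst hxy
    simp [odoDist]
  have hne : {n | x.1 n ≠ y.1 n}.Nonempty := not_forall.mp fun h => hxy (Subtype.ext (funext h))
  rw [odoDist, if_neg hxy, pow_le_pow_iff_right_of_lt_one₀ (by norm_num) (by norm_num)]
  constructor
  · intro hN
    simpa using Nat.notMem_of_lt_sInf hN
  · intro hN
    by_contra! hlt
    exact Nat.sInf_mem hne (Odo.apply_eq_of_le (Nat.le_of_lt_succ hlt) hN)

theorem exists_tau_cylRightMul_apply_eq {m N : ℕ} (hmN : m ≤ N) {f : Odo Γ hdec ≃ₜ Odo Γ hdec}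
    (hf : ∀ a : G ⧸ Γ m, ∃ ξ : Odo Γ hdec, ∀ x : Odo Γ hdec, x.1 m = a → f x = x * ξ⁻¹) :
    ∃ g : Odo Γ hdec ≃ₜ Odo Γ hdec,
      (∀ a : G ⧸ Γ m, ∃ γ : G, ∀ x : Odo Γ hdec, x.1 m = a → g x = x * (tau Γ hdec γ)⁻¹) ∧
        ∀ x, (g x).1 N = (f x).1 N := by
  choose ξ hξ using hf
  choose γ hγ using fun a => Odo.exists_tau_apply_eq (ξ a) N
  set e : G ⧸ Γ m → Odo Γ hdec := fun a => (tau Γ hdec (γ a))⁻¹ * ξ a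
  have he : ∀ a, (e a).1 m = 1 := fun a => by
    simp [e, Odo.apply_eq_of_le hmN (hγ a)]
  let r := fiberwiseMulRight (fun x : Odo Γ hdec => x.1 m) e (Odo.continuous_apply m)
    continuous_of_discreteTopology fun x a => by simp [he]
  have hfr : ∀ x, f (r x) = x * (tau Γ hdec (γ (x.1 m)))⁻¹ := fun x => by
    rw [fiberwiseMulRight_apply, hξ (x.1 m) _ (by simp [he])]
    simp only [e]
    group
  refine ⟨r.trans f, fun a => ⟨γ a, fun x hx => hx ▸ hfr x⟩, fun x => ?_⟩
  simp only [Homeomorph.trans_apply, hfr, hξ _ x rfl, Odo.mul_apply, Odo.inv_apply, hγ]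

theorem cylRightMul_of_forall_apply_eq {m : ℕ} {f : Odo Γ hdec → Odo Γ hdec}
    (h : ∀ N, ∃ g : Odo Γ hdec → Odo Γ hdec,
      (∀ a : G ⧸ Γ m, ∃ η : Odo Γ hdec, ∀ x : Odo Γ hdec, x.1 m = a → g x = x * η⁻¹) ∧
        ∀ x, (g x).1 N = (f x).1 N)
    (a : G ⧸ Γ m) : ∃ ξ : Odo Γ hdec, ∀ x : Odo Γ hdec, x.1 m = a → f x = x * ξ⁻¹ := by
  obtain ⟨p₀, hp₀⟩ := QuotientGroup.mk_surjective a
  set p := tau Γ hdec p₀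
  have hp : p.1 m = a := hp₀
  refine ⟨(f p)⁻¹ * p, fun x hx => ?_⟩
  have hxp : x⁻¹ * f x = p⁻¹ * f p := Subtype.ext <| funext fun N => by
    obtain ⟨g, hg, hgf⟩ := h N
    obtain ⟨η, hη⟩ := hg a
    have hη' : ∀ y : Odo Γ hdec, y.1 m = a → (y⁻¹ * f y).1 N = (η.1 N)⁻¹ := fun y hy => by
      simp [← hgf, hη y hy]
    rw [hη' x hx, hη' p hp]
  rw [mul_inv_rev, inv_inv, ← hxp]
  group

end Odometer

theorem stmt6_general {G : Type*} [Group G] (Γ : ℕ → Subgroup G) [∀ n, (Γ n).Normal]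
    (hdec : ∀ n, Γ (n + 1) ≤ Γ n) (m : ℕ) :
    ∀ f : ↥(Odo Γ hdec) ≃ₜ ↥(Odo Γ hdec),
      ((∀ a : G ⧸ Γ m, ∃ ξ : ↥(Odo Γ hdec),
          ∀ x : ↥(Odo Γ hdec), (x : ∀ k, G ⧸ Γ k) m = a → f x = x * ξ⁻¹) ↔
        ∀ ε : ℝ, 0 < ε → ∃ g : ↥(Odo Γ hdec) ≃ₜ ↥(Odo Γ hdec),
          (∀ a : G ⧸ Γ m, ∃ γ : G, ∀ x : ↥(Odo Γ hdec), (x : ∀ k, G ⧸ Γ k) m = a →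
            g x = x * (tau Γ hdec γ)⁻¹) ∧
          ∀ x, odoDist (g x) (f x) ≤ ε) := by
  intro f
  constructor
  · intro hf ε hε
    obtain ⟨n, hn⟩ := exists_pow_lt_of_lt_one hε (by norm_num : (1 / 2 : ℝ) < 1)
    obtain ⟨g, hg, hgf⟩ := exists_tau_cylRightMul_apply_eq (le_max_left m n) hf
    refine ⟨g, hg, fun x => (odoDist_le_iff.2 (hgf x)).trans (le_trans ?_ hn.le)⟩
    exact pow_le_pow_of_le_one (by norm_num) (by norm_num) ((le_max_right m n).trans (by omega))
  · intro h
    refine cylRightMul_of_forall_apply_eq fun N => ?_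
    obtain ⟨g, hg, hgf⟩ := h _ (by positivity : (0 : ℝ) < (1 / 2) ^ (N + 1))
    refine ⟨g, fun a => ?_, fun x => odoDist_le_iff.1 (hgf x)⟩
    obtain ⟨γ, hγ⟩ := hg a
    exact ⟨tau Γ hdec γ, hγ⟩

/-- the uniform closure of `[[G]]_{m,R}` equals `[[X]]_{m,R}`. -/
theorem stmt6 {G : Type*} [Group G] (Γ : ℕ → Subgroup G) [∀ n, (Γ n).Normal]
    [∀ n, (Γ n).FiniteIndex] (hdec : ∀ n, Γ (n + 1) ≤ Γ n)
    (htriv : ∀ g : G, (∀ n, g ∈ Γ n) → g = 1) [Infinite G] (m : ℕ) :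
    ∀ f : ↥(Odo Γ hdec) ≃ₜ ↥(Odo Γ hdec),
      ((∀ a : G ⧸ Γ m, ∃ ξ : ↥(Odo Γ hdec),
          ∀ x : ↥(Odo Γ hdec), (x : ∀ k, G ⧸ Γ k) m = a → f x = x * ξ⁻¹) ↔
        ∀ ε : ℝ, 0 < ε → ∃ g : ↥(Odo Γ hdec) ≃ₜ ↥(Odo Γ hdec),
          (∀ a : G ⧸ Γ m, ∃ γ : G, ∀ x : ↥(Odo Γ hdec), (x : ∀ k, G ⧸ Γ k) m = a →
            g x = x * (tau Γ hdec γ)⁻¹) ∧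
          ∀ x, odoDist (g x) (f x) ≤ ε) :=
  stmt6_general Γ hdec m

end OdoPaper
end
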